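/- arXiv:2209.00211 — 2 statements merged into one kernel-verified Lean document; each statement's English description precedes it below -/
import Mathlib

section
/- Let 0 < α < 1, C > 0, τ > 0, and let n ≥ 2 be an integer with t_{n−1} = (n−1)τ, t_n = nτ. Let f : ℝ → ℝ be twice continuously differentiable on [t_{n−1}, t_n] with |f''(t)| ≤ C·t^{α−1} for all t ∈ [t_{n−1}, t_n]. Then |(1/τ)·∫_{t_{n−1}}^{t_n} [ f(t) − ( ((t_n−t)/τ)·f(t_{n−1}) + ((t−t_{n−1})/τ)·f(t_n) ) ] dt| ≤ (2C/α)·τ·(t_n^α − t_{n−1}^α). -/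
/-!
The interpolation error `e = f - Π f` vanishes at both endpoints, so by the mean value theorem
`e' = f' - f' ξ` for some `ξ`; hence `|e'| ≤ ∫ |f''|` by the fundamental theorem of calculus and
`|e| ≤ τ ∫ |f''|` on the interval. The weight `t ^ (α - 1)` integrates to
`(t_n ^ α - t_{n-1} ^ α) / α` over the interval.
-/

open MeasureTheory Set intervalIntegral

theorem abs_sub_le_integral_abs_of_hasDerivWithinAt {f f' : ℝ → ℝ} {a b s t : ℝ}
    (hf : ∀ x ∈ Icc a b, HasDerivWithinAt f (f' x) (Icc a b) x)
    (hf' : IntervalIntegrable f' volume a b) (hs : s ∈ Icc a b) (ht : t ∈ Icc a b) :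
    |f t - f s| ≤ ∫ x in a..b, |f' x| := by
  wlog hst : s ≤ t generalizing s t
  · rw [abs_sub_comm]
    exact this ht hs (le_of_not_ge hst)
  have hsub : Icc s t ⊆ Icc a b := Icc_subset_Icc hs.1 ht.2
  have hftc : ∫ x in s..t, f' x = f t - f s :=
    integral_eq_sub_of_hasDerivAt_of_le hst
      (fun x hx => (hf x (hsub hx)).continuousWithinAt.mono hsub)
      (fun x hx => (hf x (hsub (Ioo_subset_Icc_self hx))).hasDerivAt
        (Icc_mem_nhds (hs.1.trans_lt hx.1) (hx.2.trans_le ht.2)))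
      (hf'.mono_set (by rwa [uIcc_of_le hst, uIcc_of_le (hs.1.trans hs.2)]))
  rw [← hftc]
  calc |∫ x in s..t, f' x| ≤ ∫ x in s..t, |f' x| := abs_integral_le_integral_abs hst
    _ ≤ ∫ x in a..b, |f' x| :=
      integral_mono_interval hs.1 hst ht.2 (ae_of_all _ fun _ => abs_nonneg _) hf'.abs

theorem integral_abs_le_of_abs_le_mul_rpow {g : ℝ → ℝ} {a b C α : ℝ} (hab : a ≤ b)
    (hα : 0 < α) (hg : IntervalIntegrable g volume a b)
    (hbound : ∀ t ∈ Icc a b, |g t| ≤ C * t ^ (α - 1)) :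
    ∫ t in a..b, |g t| ≤ C / α * (b ^ α - a ^ α) := by
  have hexp : -1 < α - 1 := by linarith
  calc ∫ t in a..b, |g t| ≤ ∫ t in a..b, C * t ^ (α - 1) :=
        integral_mono_on hab hg.abs ((intervalIntegrable_rpow' hexp).const_mul C) hbound
    _ = C / α * (b ^ α - a ^ α) := by
        rw [intervalIntegral.integral_const_mul, integral_rpow (Or.inl hexp), sub_add_cancel]
        ring

theorem abs_sub_linearInterpolant_le {f f' : ℝ → ℝ} {a b K t : ℝ} (hab : a < b)
    (hf : ∀ x ∈ Icc a b, HasDerivWithinAt f (f' x) (Icc a b) x)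
    (hK : ∀ s ∈ Icc a b, ∀ t ∈ Icc a b, |f' t - f' s| ≤ K) (ht : t ∈ Icc a b) :
    |f t - ((b - t) / (b - a) * f a + (t - a) / (b - a) * f b)| ≤ K * (t - a) := by
  obtain ⟨ξ, hξ, hslope⟩ := exists_hasDerivAt_eq_slope f f' hab
    (fun x hx => (hf x hx).continuousWithinAt)
    (fun x hx => (hf x (Ioo_subset_Icc_self hx)).hasDerivAt (Icc_mem_nhds hx.1 hx.2))
  have hinterp : (b - t) / (b - a) * f a + (t - a) / (b - a) * f b = f a + (t - a) * f' ξ := by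
    rw [hslope]
    field_simp [(sub_pos.2 hab).ne']
    ring
  have herr : ∀ x ∈ Icc a b,
      HasDerivWithinAt (fun x => f x - (f a + (x - a) * f' ξ)) (f' x - f' ξ) (Icc a b) x := by
    intro x hx
    have hline := (((hasDerivWithinAt_id x (Icc a b)).sub_const a).mul_const (f' ξ)).const_add (f a)
    rw [one_mul] at hline
    exact (hf x hx).sub hline
  have hmvt := (convex_Icc a b).norm_image_sub_le_of_norm_hasDerivWithin_le herr
    (fun x hx => hK ξ (Ioo_subset_Icc_self hξ) x hx) (left_mem_Icc.2 hab.le) ht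
  simpa [hinterp, abs_of_nonneg (sub_nonneg.2 ht.1)] using hmvt

theorem abs_average_sub_linearInterpolant_le {f f' f'' : ℝ → ℝ} {a b : ℝ} (hab : a < b)
    (hf : ∀ x ∈ Icc a b, HasDerivWithinAt f (f' x) (Icc a b) x)
    (hf' : ∀ x ∈ Icc a b, HasDerivWithinAt f' (f'' x) (Icc a b) x)
    (hf'' : IntervalIntegrable f'' volume a b) :
    |(1 / (b - a)) * ∫ t in a..b, (f t - ((b - t) / (b - a) * f a + (t - a) / (b - a) * f b))|
      ≤ (b - a) * ∫ t in a..b, |f'' t| := by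
  set K := ∫ t in a..b, |f'' t|
  have hK0 : 0 ≤ K := integral_nonneg hab.le fun _ _ => abs_nonneg _
  have hpointwise : ∀ t ∈ uIoc a b,
      ‖f t - ((b - t) / (b - a) * f a + (t - a) / (b - a) * f b)‖ ≤ K * (b - a) := by
    intro t ht
    rw [uIoc_of_le hab.le] at ht
    refine (abs_sub_linearInterpolant_le hab hf
      (fun s hs t ht => abs_sub_le_integral_abs_of_hasDerivWithinAt hf' hf'' hs ht)
      (Ioc_subset_Icc_self ht)).trans ?_
    gcongr
    exact ht.2
  have hlen : 0 < b - a := sub_pos.2 hab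
  have hintegral := norm_integral_le_of_norm_le_const hpointwise
  rw [Real.norm_eq_abs, abs_of_pos hlen] at hintegral
  rw [abs_mul, abs_of_pos (one_div_pos.2 hlen)]
  calc 1 / (b - a) * |∫ t in a..b, (f t - ((b - t) / (b - a) * f a + (t - a) / (b - a) * f b))|
      ≤ 1 / (b - a) * (K * (b - a) * (b - a)) := by gcongr
    _ = (b - a) * K := by field_simp

theorem averaged_interpolant_error_general
    (α C τ : ℝ) (hα0 : 0 < α) (hτ : 0 < τ)
    (n : ℕ)
    (f f' f'' : ℝ → ℝ)
    (hf : ∀ t ∈ Set.Icc (((n : ℝ) - 1) * τ) ((n : ℝ) * τ),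
      HasDerivWithinAt f (f' t) (Set.Icc (((n : ℝ) - 1) * τ) ((n : ℝ) * τ)) t)
    (hf' : ∀ t ∈ Set.Icc (((n : ℝ) - 1) * τ) ((n : ℝ) * τ),
      HasDerivWithinAt f' (f'' t) (Set.Icc (((n : ℝ) - 1) * τ) ((n : ℝ) * τ)) t)
    (hcont : ContinuousOn f'' (Set.Icc (((n : ℝ) - 1) * τ) ((n : ℝ) * τ)))
    (hbound : ∀ t ∈ Set.Icc (((n : ℝ) - 1) * τ) ((n : ℝ) * τ), |f'' t| ≤ C * t ^ (α - 1)) :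
    |(1 / τ) * ∫ t in (((n : ℝ) - 1) * τ)..((n : ℝ) * τ),
        (f t - ((((n : ℝ) * τ - t) / τ) * f (((n : ℝ) - 1) * τ)
          + ((t - ((n : ℝ) - 1) * τ) / τ) * f ((n : ℝ) * τ)))|
      ≤ (2 * C / α) * τ * (((n : ℝ) * τ) ^ α - (((n : ℝ) - 1) * τ) ^ α) := by
  have hlen : (n : ℝ) * τ - ((n : ℝ) - 1) * τ = τ := by ring
  have hab : ((n : ℝ) - 1) * τ < (n : ℝ) * τ := by linarith
  have hf'' := hcont.intervalIntegrable_of_Icc (μ := volume) hab.le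
  have herr := abs_average_sub_linearInterpolant_le hab hf hf' hf''
  rw [hlen] at herr
  have hweight := integral_abs_le_of_abs_le_mul_rpow hab.le hα0 hf'' hbound
  have hK0 : 0 ≤ ∫ t in ((n : ℝ) - 1) * τ..(n : ℝ) * τ, |f'' t| :=
    integral_nonneg hab.le fun _ _ => abs_nonneg _
  calc _ ≤ τ * ∫ t in ((n : ℝ) - 1) * τ..(n : ℝ) * τ, |f'' t| := herr
    _ ≤ τ * (C / α * (((n : ℝ) * τ) ^ α - (((n : ℝ) - 1) * τ) ^ α)) := by gcongr
    _ ≤ (2 * C / α) * τ * (((n : ℝ) * τ) ^ α - (((n : ℝ) - 1) * τ) ^ α) := by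
        have hnonneg := mul_nonneg hτ.le (hK0.trans hweight)
        rw [mul_div_assoc]
        linarith

/-- The estimate (2.16): averaged truncation error of the two-point linear
interpolant on [t_{n−1}, t_n] under the weighted regularity assumption. -/
theorem averaged_interpolant_error
    (α C τ : ℝ) (hα0 : 0 < α) (hα1 : α < 1) (hC : 0 < C) (hτ : 0 < τ)
    (n : ℕ) (hn : 2 ≤ n)
    (f f' f'' : ℝ → ℝ)
    (hf : ∀ t ∈ Set.Icc (((n : ℝ) - 1) * τ) ((n : ℝ) * τ),
      HasDerivWithinAt f (f' t) (Set.Icc (((n : ℝ) - 1) * τ) ((n : ℝ) * τ)) t)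
    (hf' : ∀ t ∈ Set.Icc (((n : ℝ) - 1) * τ) ((n : ℝ) * τ),
      HasDerivWithinAt f' (f'' t) (Set.Icc (((n : ℝ) - 1) * τ) ((n : ℝ) * τ)) t)
    (hcont : ContinuousOn f'' (Set.Icc (((n : ℝ) - 1) * τ) ((n : ℝ) * τ)))
    (hbound : ∀ t ∈ Set.Icc (((n : ℝ) - 1) * τ) ((n : ℝ) * τ), |f'' t| ≤ C * t ^ (α - 1)) :
    |(1 / τ) * ∫ t in (((n : ℝ) - 1) * τ)..((n : ℝ) * τ),
        (f t - ((((n : ℝ) * τ - t) / τ) * f (((n : ℝ) - 1) * τ)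
          + ((t - ((n : ℝ) - 1) * τ) / τ) * f ((n : ℝ) * τ)))|
      ≤ (2 * C / α) * τ * (((n : ℝ) * τ) ^ α - (((n : ℝ) - 1) * τ) ^ α) :=
  averaged_interpolant_error_general α C τ hα0 hτ n f f' f'' hf hf' hcont hbound
end

section
/- Let 0 < α < 1, T > 0, C > 0, and let f : ℝ → ℝ be continuously differentiable on [0, T] and twice continuously differentiable on (0, T] with |f''(t)| ≤ C·t^{α−1} for all t ∈ (0, T]. For a positive integer 𝒩 set τ = T/𝒩 and t_m = mτ, and define (R1)¹ = (1/τ)∫_0^{t_1}(f(t) − f(t_1)) dt and, for m ≥ 2, (R1)^m = (1/τ)∫_{t_{m−1}}^{t_m}[ f(t) − ( ((t_m−t)/τ)f(t_{m−1}) + ((t−t_{m−1})/τ)f(t_m) ) ] dt. Then there exists a constant C' depending only on α, T, C, and sup_{[0,T]}|f'|, but not on τ or 𝒩, such that τ·∑_{m=1}^{n} |(R1)^m| ≤ C'·τ² for every 1 ≤ n ≤ 𝒩. -/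
/-!
On the first step `f t - f τ = O(τ)` since `f'` is bounded on `[0, T]`, so `(R1)¹ = O(τ)`.
For `m ≥ 2`, `(R1)^m` is `1/τ` times the error of the trapezoidal rule on `[t_{m-1}, t_m]`,
which is at most `τ³/12 · sup |f''| ≤ C τ³ t_{m-1}^{α-1} / 12`. Finally `τ ∑_{m ≥ 2} t_{m-1}^{α-1}`
is a lower Riemann sum of the decreasing function `t ↦ t^{α-1}`, hence at most
`∫_0^T t^{α-1} dt = T^α / α`.
-/

open MeasureTheory Set Finset

theorem abs_integral_sub_trapezoid_le {f f' f'' : ℝ → ℝ} {a b K : ℝ} (hab : a < b)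
    (hf : ∀ t ∈ Icc a b, HasDerivWithinAt f (f' t) (Icc a b) t)
    (hf' : ∀ t ∈ Icc a b, HasDerivWithinAt f' (f'' t) (Icc a b) t)
    (hK : ∀ t ∈ Icc a b, |f'' t| ≤ K) :
    |(∫ t in a..b, f t) - (b - a) * (f a + f b) / 2| ≤ K * (b - a) ^ 3 / 12 := by
  have hs := uniqueDiffOn_Icc hab
  have h_deriv : EqOn (derivWithin f (Icc a b)) f' (Icc a b) := fun t ht =>
    (hf t ht).derivWithin (hs t ht)
  have h_deriv2 (t : ℝ) : |iteratedDerivWithin 2 f (Icc a b) t| ≤ K := by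
    rw [iteratedDerivWithin_succ, iteratedDerivWithin_one]
    by_cases ht : t ∈ Icc a b
    · rw [derivWithin_congr h_deriv (h_deriv ht), (hf' t ht).derivWithin (hs t ht)]
      exact hK t ht
    · rw [derivWithin_zero_of_notMem_closure (by rwa [closure_Icc]), abs_zero]
      exact (abs_nonneg _).trans (hK a (left_mem_Icc.2 hab.le))
  have h := trapezoidal_error_le (N := 1) (a := a) (b := b) (ζ := K)
    (by rw [uIcc_of_lt hab]; exact fun t ht => (hf t ht).differentiableWithinAt)
    (by rw [uIcc_of_lt hab]
        exact fun t ht => (hf' t ht).differentiableWithinAt.congr h_deriv (h_deriv ht))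
    (by rw [uIcc_of_lt hab]; exact h_deriv2) one_pos
  rw [trapezoidal_error, trapezoidal_integral_one, abs_sub_comm, abs_of_pos (sub_pos.2 hab)] at h
  convert h using 2 <;> ring

theorem integral_sub_linear_interpolation {f : ℝ → ℝ} {a b τ : ℝ}
    (hf : IntervalIntegrable f volume a b) (hτ : b - a = τ) :
    ∫ t in a..b, (f t - ((b - t) / τ * f a + (t - a) / τ * f b))
      = (∫ t in a..b, f t) - (b - a) * (f a + f b) / 2 := by
  subst hτ
  rw [intervalIntegral.integral_sub hf (Continuous.intervalIntegrable (by fun_prop) _ _)]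
  rcases eq_or_ne a b with rfl | hab
  · simp
  · congr 1
    rw [intervalIntegral.integral_add (Continuous.intervalIntegrable (by fun_prop) _ _)
      (Continuous.intervalIntegrable (by fun_prop) _ _)]
    simp only [intervalIntegral.integral_mul_const, intervalIntegral.integral_div]
    rw [intervalIntegral.integral_sub intervalIntegrable_const
        intervalIntegral.intervalIntegrable_id,
      intervalIntegral.integral_sub intervalIntegral.intervalIntegrable_id intervalIntegrable_const]
    simp only [integral_id, intervalIntegral.integral_const, smul_eq_mul]
    field_simp [sub_ne_zero.2 hab.symm]
    ring

theorem abs_integral_sub_right_le {f f' : ℝ → ℝ} {a b M : ℝ} (hab : a ≤ b)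
    (hf : ∀ t ∈ Icc a b, HasDerivWithinAt f (f' t) (Icc a b) t)
    (hM : ∀ t ∈ Icc a b, ‖f' t‖ ≤ M) :
    |∫ t in a..b, (f t - f b)| ≤ M * (b - a) ^ 2 := by
  have hb : b ∈ Icc a b := right_mem_Icc.2 hab
  have h (t : ℝ) (ht : t ∈ uIoc a b) : ‖f t - f b‖ ≤ M * (b - a) := by
    rw [uIoc_of_le hab] at ht
    calc ‖f t - f b‖ ≤ M * ‖t - b‖ := (convex_Icc a b).norm_image_sub_le_of_norm_hasDerivWithin_le
          hf hM hb (Ioc_subset_Icc_self ht)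
      _ ≤ M * (b - a) := by
        have hM0 : 0 ≤ M := (norm_nonneg _).trans (hM b hb)
        gcongr
        rw [Real.norm_eq_abs, abs_sub_comm, abs_of_nonneg (by linarith [ht.2])]
        linarith [ht.1]
  simpa [abs_of_nonneg (sub_nonneg.2 hab), pow_two, mul_assoc] using
    intervalIntegral.norm_integral_le_of_norm_le_const h

theorem mul_sub_mul_rpow_le_rpow_sub_rpow {α x y : ℝ} (hα0 : 0 < α) (hα1 : α ≤ 1)
    (hx : 0 ≤ x) (hxy : x < y) :
    α * (y - x) * y ^ (α - 1) ≤ y ^ α - x ^ α := by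
  obtain ⟨c, hc, hslope⟩ := exists_hasDerivAt_eq_slope (fun t : ℝ => t ^ α)
    (fun t => α * t ^ (α - 1)) hxy
    (fun t _ => (Real.continuousAt_rpow_const t α (Or.inr hα0.le)).continuousWithinAt)
    (fun t ht => Real.hasDerivAt_rpow_const (Or.inl (hx.trans_lt ht.1).ne'))
  have hc0 : 0 < c := hx.trans_lt hc.1
  calc α * (y - x) * y ^ (α - 1) ≤ α * (y - x) * c ^ (α - 1) := by
        have hαyx : 0 ≤ α * (y - x) := by nlinarith
        exact mul_le_mul_of_nonneg_left
          (Real.rpow_le_rpow_of_nonpos hc0 hc.2.le (by linarith)) hαyx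
    _ = y ^ α - x ^ α := by
        rw [mul_right_comm, hslope]
        field_simp [(sub_pos.2 hxy).ne']

theorem mul_sum_range_rpow_le {α τ : ℝ} (hα0 : 0 < α) (hα1 : α ≤ 1) (hτ : 0 < τ) (N : ℕ) :
    τ * ∑ k ∈ range N, (((k : ℝ) + 1) * τ) ^ (α - 1) ≤ ((N : ℝ) * τ) ^ α / α := by
  induction N with
  | zero => simp [Real.zero_rpow hα0.ne']
  | succ N ih =>
    have h := mul_sub_mul_rpow_le_rpow_sub_rpow hα0 hα1 (by positivity : 0 ≤ (N : ℝ) * τ)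
      (by nlinarith : (N : ℝ) * τ < ((N : ℝ) + 1) * τ)
    rw [sum_range_succ, mul_add, Nat.cast_succ, le_div_iff₀ hα0]
    rw [le_div_iff₀ hα0] at ih
    nlinarith

theorem sum_Icc_one_eq_add_sum_range {β : Type*} [AddCommMonoid β] (g : ℕ → β) (N : ℕ) :
    ∑ m ∈ Icc 1 (N + 1), g m = g 1 + ∑ k ∈ range N, g (k + 2) := by
  induction N with
  | zero => simp
  | succ N ih => rw [sum_Icc_succ_top (by omega), ih, sum_range_succ, add_assoc]

theorem abs_cn_first_step_le {T M τ : ℝ} {f f' : ℝ → ℝ}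
    (hf : ∀ t ∈ Icc 0 T, HasDerivWithinAt f (f' t) (Icc 0 T) t)
    (hM : ∀ t ∈ Icc 0 T, ‖f' t‖ ≤ M) (hτ : 0 < τ) (hτT : τ ≤ T) :
    |1 / τ * ∫ t in (0 : ℝ)..τ, (f t - f τ)| ≤ M * τ := by
  have hsub : Icc 0 τ ⊆ Icc 0 T := Icc_subset_Icc_right hτT
  have h := abs_integral_sub_right_le hτ.le (fun t ht => (hf t (hsub ht)).mono hsub)
    (fun t ht => hM t (hsub ht))
  rw [sub_zero] at h
  rw [abs_mul, abs_of_pos (one_div_pos.2 hτ)]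
  calc 1 / τ * |∫ t in (0 : ℝ)..τ, (f t - f τ)| ≤ 1 / τ * (M * τ ^ 2) := by gcongr
    _ = M * τ := by field_simp

theorem abs_cn_interior_step_le {α T C a b τ : ℝ} {f f' f'' : ℝ → ℝ} (hα1 : α < 1) (hC : 0 ≤ C)
    (hf : ∀ t ∈ Icc 0 T, HasDerivWithinAt f (f' t) (Icc 0 T) t)
    (hf' : ∀ t ∈ Ioc 0 T, HasDerivWithinAt f' (f'' t) (Ioc 0 T) t)
    (hbound : ∀ t ∈ Ioc 0 T, |f'' t| ≤ C * t ^ (α - 1))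
    (ha : 0 < a) (hbT : b ≤ T) (hτ : 0 < τ) (hab : b - a = τ) :
    |1 / τ * ∫ t in a..b, (f t - ((b - t) / τ * f a + (t - a) / τ * f b))|
      ≤ C / 12 * τ ^ 2 * a ^ (α - 1) := by
  have hsub : Icc a b ⊆ Icc 0 T := Icc_subset_Icc ha.le hbT
  have hsub' : Icc a b ⊆ Ioc 0 T := fun t ht => ⟨ha.trans_le ht.1, ht.2.trans hbT⟩
  have hf_ab (t : ℝ) (ht : t ∈ Icc a b) : HasDerivWithinAt f (f' t) (Icc a b) t :=
    (hf t (hsub ht)).mono hsub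
  have hf''_le (t : ℝ) (ht : t ∈ Icc a b) : |f'' t| ≤ C * a ^ (α - 1) :=
    (hbound t (hsub' ht)).trans <| mul_le_mul_of_nonneg_left
      (Real.rpow_le_rpow_of_nonpos ha ht.1 (by linarith)) hC
  have htrap := abs_integral_sub_trapezoid_le (by linarith) hf_ab
    (fun t ht => (hf' t (hsub' ht)).mono hsub') hf''_le
  have hint : IntervalIntegrable f volume a b :=
    ContinuousOn.intervalIntegrable_of_Icc (by linarith)
      fun t ht => (hf_ab t ht).continuousWithinAt
  rw [integral_sub_linear_interpolation hint hab, abs_mul, abs_of_pos (one_div_pos.2 hτ), hab]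
  rw [hab] at htrap
  calc 1 / τ * |(∫ t in a..b, f t) - τ * (f a + f b) / 2|
      ≤ 1 / τ * (C * a ^ (α - 1) * τ ^ 3 / 12) := by gcongr
    _ = C / 12 * τ ^ 2 * a ^ (α - 1) := by field_simp

theorem accumulated_cn_truncation_error_general
    (α T C : ℝ) (hα0 : 0 < α) (hα1 : α < 1) (hT : 0 < T) (hC : 0 < C)
    (f f' f'' : ℝ → ℝ)
    (hf : ∀ t ∈ Set.Icc (0 : ℝ) T, HasDerivWithinAt f (f' t) (Set.Icc (0 : ℝ) T) t)
    (hf'c : ContinuousOn f' (Set.Icc (0 : ℝ) T))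
    (hf' : ∀ t ∈ Set.Ioc (0 : ℝ) T, HasDerivWithinAt f' (f'' t) (Set.Ioc (0 : ℝ) T) t)
    (hbound : ∀ t ∈ Set.Ioc (0 : ℝ) T, |f'' t| ≤ C * t ^ (α - 1)) :
    ∃ C' > 0, ∀ 𝒩 : ℕ, 0 < 𝒩 →
      let τ : ℝ := T / (𝒩 : ℝ)
      let R1 : ℕ → ℝ := fun m =>
        if m = 1 then (1 / τ) * ∫ t in (0 : ℝ)..τ, (f t - f τ)
        else (1 / τ) * ∫ t in (((m : ℝ) - 1) * τ)..((m : ℝ) * τ),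
          (f t - ((((m : ℝ) * τ - t) / τ) * f (((m : ℝ) - 1) * τ)
            + ((t - ((m : ℝ) - 1) * τ) / τ) * f ((m : ℝ) * τ)))
      ∀ n : ℕ, 1 ≤ n → n ≤ 𝒩 →
        τ * ∑ m ∈ Finset.Icc 1 n, |R1 m| ≤ C' * τ ^ 2 := by
  obtain ⟨M, hM⟩ := isCompact_Icc.exists_bound_of_continuousOn hf'c
  have hM0 : 0 ≤ M := (norm_nonneg _).trans (hM 0 ⟨le_rfl, hT.le⟩)
  refine ⟨M + C * T ^ α / (12 * α), by positivity, ?_⟩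
  intro 𝒩 h𝒩 τ R1 n hn hn𝒩
  have hτ : 0 < τ := by positivity
  have hgrid (m : ℕ) (hm : m ≤ 𝒩) : (m : ℝ) * τ ≤ T := by
    calc (m : ℝ) * τ ≤ 𝒩 * τ := by gcongr
      _ = T := by simp only [τ]; field_simp
  obtain ⟨N, rfl⟩ : ∃ N, n = N + 1 := ⟨n - 1, by omega⟩
  have h_first : |R1 1| ≤ M * τ :=
    abs_cn_first_step_le hf hM hτ (by simpa using hgrid 1 h𝒩)
  have h_step (k : ℕ) (hk : k < N) :
      |R1 (k + 2)| ≤ C / 12 * τ ^ 2 * (((k : ℝ) + 1) * τ) ^ (α - 1) := by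
    have hk2 : ((k + 2 : ℕ) : ℝ) - 1 = k + 1 := by push_cast; ring
    simp only [R1, if_neg (by omega : k + 2 ≠ 1)]
    refine (abs_cn_interior_step_le hα1 hC.le hf hf' hbound ?_ (hgrid _ (by omega))
      hτ (by ring)).trans_eq (by rw [hk2])
    rw [hk2]; positivity
  calc τ * ∑ m ∈ Icc 1 (N + 1), |R1 m| = τ * (|R1 1| + ∑ k ∈ range N, |R1 (k + 2)|) := by
        rw [sum_Icc_one_eq_add_sum_range]
    _ ≤ τ * (M * τ + ∑ k ∈ range N, C / 12 * τ ^ 2 * (((k : ℝ) + 1) * τ) ^ (α - 1)) := by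
        gcongr with k hk
        exact h_step k (mem_range.1 hk)
    _ = M * τ ^ 2 + C / 12 * τ ^ 2 * (τ * ∑ k ∈ range N, (((k : ℝ) + 1) * τ) ^ (α - 1)) := by
        rw [← mul_sum]; ring
    _ ≤ M * τ ^ 2 + C / 12 * τ ^ 2 * (((N : ℝ) * τ) ^ α / α) := by
        gcongr; exact mul_sum_range_rpow_le hα0 hα1.le hτ N
    _ ≤ M * τ ^ 2 + C / 12 * τ ^ 2 * (T ^ α / α) := by
        gcongr; exact hgrid N (by omega)
    _ = (M + C * T ^ α / (12 * α)) * τ ^ 2 := by ring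

/-- Lemma 2.3 (pointwise/scalar form): the accumulated Crank–Nicolson time-averaging
truncation errors are of second order, τ·∑_{m=1}^n |(R1)^m| ≤ C'·τ². -/
theorem accumulated_cn_truncation_error
    (α T C : ℝ) (hα0 : 0 < α) (hα1 : α < 1) (hT : 0 < T) (hC : 0 < C)
    (f f' f'' : ℝ → ℝ)
    (hf : ∀ t ∈ Set.Icc (0 : ℝ) T, HasDerivWithinAt f (f' t) (Set.Icc (0 : ℝ) T) t)
    (hf'c : ContinuousOn f' (Set.Icc (0 : ℝ) T))
    (hf' : ∀ t ∈ Set.Ioc (0 : ℝ) T, HasDerivWithinAt f' (f'' t) (Set.Ioc (0 : ℝ) T) t)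
    (hf''c : ContinuousOn f'' (Set.Ioc (0 : ℝ) T))
    (hbound : ∀ t ∈ Set.Ioc (0 : ℝ) T, |f'' t| ≤ C * t ^ (α - 1)) :
    ∃ C' > 0, ∀ 𝒩 : ℕ, 0 < 𝒩 →
      let τ : ℝ := T / (𝒩 : ℝ)
      let R1 : ℕ → ℝ := fun m =>
        if m = 1 then (1 / τ) * ∫ t in (0 : ℝ)..τ, (f t - f τ)
        else (1 / τ) * ∫ t in (((m : ℝ) - 1) * τ)..((m : ℝ) * τ),
          (f t - ((((m : ℝ) * τ - t) / τ) * f (((m : ℝ) - 1) * τ)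
            + ((t - ((m : ℝ) - 1) * τ) / τ) * f ((m : ℝ) * τ)))
      ∀ n : ℕ, 1 ≤ n → n ≤ 𝒩 →
        τ * ∑ m ∈ Finset.Icc 1 n, |R1 m| ≤ C' * τ ^ 2 :=
  accumulated_cn_truncation_error_general α T C hα0 hα1 hT hC f f' f'' hf hf'c hf' hbound
end
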